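/- Let n and r be integers with 1 ≤ r and 2r ≤ n, and let P be the transition matrix of the simple random walk on the Johnson graph J(n,r), i.e., P = (1/(r(n−r))) · A where A is the adjacency matrix of J(n,r). Then every eigenvalue λ of P with λ ≠ 1 satisfies λ ≤ 1 − n/(r(n−r)); that is, the eigenvalue gap of the walk on J(n,r) is at least n/(r(n−r)). -/

import Mathlib

open scoped symmDiff

/-- The Johnson graph `J(n,r)`: vertices are the `r`-element subsets of `{1,…,n}`,
two vertices being adjacent iff their symmetric difference has size 2. -/
def johnsonGraph (n r : ℕ) : SimpleGraph {S : Finset (Fin n) // S.card = r} where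
  Adj s t := (s.1 ∆ t.1).card = 2
  symm := ⟨fun s t h => by change (t.1 ∆ s.1).card = 2; change (s.1 ∆ t.1).card = 2 at h; rwa [symmDiff_comm]⟩
  loopless := ⟨fun s h => by change (s.1 ∆ s.1).card = 2 at h; simp only [symmDiff_self] at h; simp at h⟩

instance (n r : ℕ) : DecidableRel (johnsonGraph n r).Adj :=
  fun s t => inferInstanceAs (Decidable ((s.1 ∆ t.1).card = 2))

open Finset Matrix

private lemma card_sd {α : Type*} [DecidableEq α] (S T : Finset α) :
    (S ∆ T).card + 2 * (S ∩ T).card = S.card + T.card := by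
  have h1 : S ∆ T = (S ∪ T) \ (S ∩ T) := symmDiff_eq_sup_sdiff_inf S T
  have h2 : (S ∆ T).card + (S ∩ T).card = (S ∪ T).card := by
    rw [h1]
    exact Finset.card_sdiff_add_card_eq_card (Finset.inter_subset_union)
  have h3 := Finset.card_union_add_card_inter S T
  omega

private lemma sd_ne_zero {α : Type*} [DecidableEq α] {S T : Finset α} (h : S ≠ T) :
    (S ∆ T).card ≠ 0 := by
  intro hh
  rw [Finset.card_eq_zero] at hh
  exact h (symmDiff_eq_bot.mp hh)

/-- number of `m`-subsets containing a fixed `k`-set -/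
private lemma count_supersets {n k m : ℕ} (B : Finset (Fin n)) (hB : B.card = k) (hkm : k ≤ m) :
    ((Finset.univ.filter fun S : Finset (Fin n) => S.card = m ∧ B ⊆ S)).card
      = (n - k).choose (m - k) := by
  have hcompl : Bᶜ.card = n - k := by
    rw [Finset.card_compl, hB, Fintype.card_fin]
  rw [← hcompl, ← Finset.card_powersetCard (m - k) Bᶜ]
  apply Finset.card_bij' (fun S _ => S \ B) (fun t _ => B ∪ t)
  · intro S hS
    simp only [Finset.mem_filter, Finset.mem_univ, true_and] at hS
    simp only [Finset.mem_powersetCard]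
    constructor
    · intro x hx
      simp only [Finset.mem_sdiff] at hx
      simp [Finset.mem_compl, hx.2]
    · rw [Finset.card_sdiff_of_subset hS.2, hS.1, hB]
  · intro t ht
    simp only [Finset.mem_powersetCard] at ht
    have hdisj : Disjoint B t := by
      rw [Finset.disjoint_right]
      intro x hx
      have := ht.1 hx
      simpa using this
    simp only [Finset.mem_filter, Finset.mem_univ, true_and]
    refine ⟨?_, Finset.subset_union_left⟩
    rw [Finset.card_union_of_disjoint hdisj, hB, ht.2]
    omega
  · intro S hS
    simp only [Finset.mem_filter, Finset.mem_univ, true_and] at hS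
    exact Finset.union_sdiff_of_subset hS.2
  · intro t ht
    simp only [Finset.mem_powersetCard] at ht
    apply Finset.union_sdiff_cancel_left
    rw [Finset.disjoint_right]
    intro x hx
    have := ht.1 hx
    simpa using this

/-- incidence matrix between (r+1)-sets and r-sets -/
private def incN (n r : ℕ) :
    Matrix {S : Finset (Fin n) // S.card = r + 1} {S : Finset (Fin n) // S.card = r} ℝ :=
  Matrix.of fun S a => if a.1 ⊆ S.1 then 1 else 0

private lemma sum_subtype_card {n r : ℕ} (f : Finset (Fin n) → ℝ) :
    ∑ a : {S : Finset (Fin n) // S.card = r}, f a.1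
      = ∑ a ∈ Finset.univ.filter (fun S : Finset (Fin n) => S.card = r), f a := by
  symm
  exact Finset.sum_subtype _ (by simp) f

private lemma claim1 (n r : ℕ) :
    incN n r * (incN n r)ᵀ
      = (johnsonGraph n (r+1)).adjMatrix ℝ + ((r : ℝ) + 1) • 1 := by
  ext S T
  have hS := S.2
  have hT := T.2
  rw [Matrix.mul_apply]
  simp only [incN, Matrix.transpose_apply, Matrix.of_apply]
  have step1 : ∀ a : {S : Finset (Fin n) // S.card = r},
      (if a.1 ⊆ S.1 then (1:ℝ) else 0) * (if a.1 ⊆ T.1 then (1:ℝ) else 0)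
      = if a.1 ⊆ S.1 ∩ T.1 then 1 else 0 := by
    intro a
    rw [ite_mul, one_mul, zero_mul]
    by_cases h1 : a.1 ⊆ S.1 <;> by_cases h2 : a.1 ⊆ T.1 <;>
      simp [h1, h2, Finset.subset_inter_iff]
  rw [Finset.sum_congr rfl (fun a _ => step1 a)]
  rw [sum_subtype_card (fun a => if a ⊆ S.1 ∩ T.1 then (1:ℝ) else 0)]
  rw [Finset.sum_boole, Finset.filter_filter]
  have hfilter : Finset.univ.filter
      (fun a : Finset (Fin n) => a.card = r ∧ a ⊆ S.1 ∩ T.1) = (S.1 ∩ T.1).powersetCard r := by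
    ext a
    simp [Finset.mem_powersetCard, and_comm]
  rw [hfilter, Finset.card_powersetCard]
  simp only [Matrix.add_apply, SimpleGraph.adjMatrix_apply, Matrix.smul_apply,
    Matrix.one_apply, smul_eq_mul]
  by_cases hST : S = T
  · subst hST
    rw [Finset.inter_self, hS]
    simp [johnsonGraph, Nat.choose_succ_self_right]
  · have hd0 : (S.1 ∆ T.1).card ≠ 0 := sd_ne_zero (fun h => hST (Subtype.ext h))
    have hcsd := card_sd S.1 T.1
    by_cases hadj : (johnsonGraph n (r+1)).Adj S T
    · have h2 : (S.1 ∆ T.1).card = 2 := hadj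
      have : (S.1 ∩ T.1).card = r := by omega
      rw [this]
      simp [hadj, hST, Nat.choose_self]
    · have h2 : (S.1 ∆ T.1).card ≠ 2 := hadj
      have : (S.1 ∩ T.1).card < r := by omega
      rw [Nat.choose_eq_zero_of_lt this]
      simp [hadj, hST]

private lemma claim2 (n r : ℕ) (hn : r ≤ n) :
    (incN n r)ᵀ * incN n r
      = (johnsonGraph n r).adjMatrix ℝ + ((n : ℝ) - r) • 1 := by
  ext a b
  have ha := a.2
  have hb := b.2
  rw [Matrix.mul_apply]
  simp only [incN, Matrix.transpose_apply, Matrix.of_apply]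
  have step1 : ∀ S : {S : Finset (Fin n) // S.card = r + 1},
      (if a.1 ⊆ S.1 then (1:ℝ) else 0) * (if b.1 ⊆ S.1 then (1:ℝ) else 0)
      = if a.1 ∪ b.1 ⊆ S.1 then 1 else 0 := by
    intro S
    rw [ite_mul, one_mul, zero_mul]
    by_cases h1 : a.1 ⊆ S.1 <;> by_cases h2 : b.1 ⊆ S.1 <;>
      simp [h1, h2, Finset.union_subset_iff]
  rw [Finset.sum_congr rfl (fun S _ => step1 S)]
  rw [sum_subtype_card (fun S => if a.1 ∪ b.1 ⊆ S then (1:ℝ) else 0)]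
  rw [Finset.sum_boole, Finset.filter_filter]
  simp only [Matrix.add_apply, SimpleGraph.adjMatrix_apply, Matrix.smul_apply,
    Matrix.one_apply, smul_eq_mul]
  have hcu := Finset.card_union_add_card_inter a.1 b.1
  by_cases hab : a = b
  · subst hab
    have hu : a.1 ∪ a.1 = a.1 := Finset.union_self a.1
    rw [hu, count_supersets a.1 ha (by omega)]
    have : r + 1 - r = 1 := by omega
    rw [this, Nat.choose_one_right]
    have : (johnsonGraph n r).Adj a a = False := by
      simp [SimpleGraph.irrefl]
    simp only [this, if_false, if_pos rfl]
    push_cast [Nat.cast_sub hn]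
    ring
  · have hd0 : (a.1 ∆ b.1).card ≠ 0 := sd_ne_zero (fun h => hab (Subtype.ext h))
    have hcsd := card_sd a.1 b.1
    by_cases hadj : (johnsonGraph n r).Adj a b
    · have h2 : (a.1 ∆ b.1).card = 2 := hadj
      have hu : (a.1 ∪ b.1).card = r + 1 := by omega
      rw [count_supersets (a.1 ∪ b.1) hu (le_refl _)]
      simp [hadj, hab, Nat.sub_self]
    · have h2 : (a.1 ∆ b.1).card ≠ 2 := hadj
      have hu : r + 2 ≤ (a.1 ∪ b.1).card := by omega
      have hempty : (Finset.univ.filter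
          fun S : Finset (Fin n) => S.card = r + 1 ∧ a.1 ∪ b.1 ⊆ S) = ∅ := by
        rw [Finset.filter_eq_empty_iff]
        rintro S - ⟨hcard, hsub⟩
        have := Finset.card_le_card hsub
        omega
      rw [hempty]
      simp [hadj, hab]

private lemma key (n : ℕ) : ∀ r : ℕ, 2 * r ≤ n → ∀ lam : ℝ,
    ∀ v : {S : Finset (Fin n) // S.card = r} → ℝ, v ≠ 0 →
    ((johnsonGraph n r).adjMatrix ℝ).mulVec v = lam • v →
    lam ≠ (r : ℝ) * ((n : ℝ) - r) → lam ≤ (r : ℝ) * ((n : ℝ) - r) - n := by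
  intro r
  induction r with
  | zero =>
    intro _ lam v hv hev hne
    exfalso
    apply hne
    have hA : (johnsonGraph n 0).adjMatrix ℝ = 0 := by
      ext s t
      have hadj : ¬ (johnsonGraph n 0).Adj s t := by
        have hs : s.1 = ∅ := Finset.card_eq_zero.mp s.2
        have ht : t.1 = ∅ := Finset.card_eq_zero.mp t.2
        show ¬ (s.1 ∆ t.1).card = 2
        rw [hs, ht]
        simp
      simp [hadj]
    rw [hA, Matrix.zero_mulVec] at hev
    obtain ⟨i, hi⟩ := Function.ne_iff.mp hv
    have h0 : lam * v i = 0 := (congrFun hev i).symm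
    have : lam = 0 := by
      rcases mul_eq_zero.mp h0 with h | h
      · exact h
      · exact absurd h hi
    simp [this]
  | succ r ih =>
    intro hr lam v hv hev hne
    have hr' : 2 * r ≤ n := by omega
    have hnR : (2 * r + 2 : ℝ) ≤ (n : ℝ) := by
      have : (2 * r + 2 : ℕ) ≤ n := by omega
      exact_mod_cast this
    push_cast at hne ⊢
    by_cases hlr : lam = -((r : ℝ) + 1)
    · subst hlr
      nlinarith [hnR]
    · -- eigenvector transfer
      have h1 : (incN n r * (incN n r)ᵀ).mulVec v = (lam + ((r : ℝ) + 1)) • v := by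
        rw [claim1, Matrix.add_mulVec, hev, Matrix.smul_mulVec, Matrix.one_mulVec]
        module
      set w := (incN n r)ᵀ.mulVec v with hw
      have hNw : (incN n r).mulVec w = (lam + ((r : ℝ) + 1)) • v := by
        rw [hw, Matrix.mulVec_mulVec, h1]
      have hw0 : w ≠ 0 := by
        intro h
        rw [h, Matrix.mulVec_zero] at hNw
        rcases smul_eq_zero.mp hNw.symm with h' | h'
        · exact hlr (by linarith [h'] )
        · exact hv h'
      have h2 : ((incN n r)ᵀ * incN n r).mulVec w = (lam + ((r : ℝ) + 1)) • w := by
        rw [hw, ← Matrix.mulVec_mulVec, ← hw, hNw, Matrix.mulVec_smul]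
      rw [claim2 n r (by omega), Matrix.add_mulVec, Matrix.smul_mulVec,
        Matrix.one_mulVec] at h2
      have hevw : ((johnsonGraph n r).adjMatrix ℝ).mulVec w
          = (lam + ((r : ℝ) + 1) - ((n : ℝ) - r)) • w := by
        have : ((johnsonGraph n r).adjMatrix ℝ).mulVec w
            = (lam + ((r : ℝ) + 1)) • w - ((n : ℝ) - (r : ℝ)) • w := by
          rw [← h2]; abel
        rw [this, ← sub_smul]
      have hmune : lam + ((r : ℝ) + 1) - ((n : ℝ) - r) ≠ (r : ℝ) * ((n : ℝ) - r) := by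
        intro h
        apply hne
        nlinarith [h]
      have := ih hr' (lam + ((r : ℝ) + 1) - ((n : ℝ) - r)) w hw0 hevw hmune
      nlinarith [this]

theorem johnsonGraph_walk_eigenvalue_gap (n r : ℕ) (h1 : 1 ≤ r) (h2 : 2 * r ≤ n)
    (P : Matrix {S : Finset (Fin n) // S.card = r} {S : Finset (Fin n) // S.card = r} ℝ)
    (hP : P = (1 / ((r : ℝ) * ((n : ℝ) - r))) • (johnsonGraph n r).adjMatrix ℝ)
    (lam : ℝ) (hlam : lam ∈ spectrum ℝ P) (hne : lam ≠ 1) :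
    lam ≤ 1 - (n : ℝ) / ((r : ℝ) * ((n : ℝ) - r)) := by
  set c : ℝ := (r : ℝ) * ((n : ℝ) - r) with hc
  have hrR : (1 : ℝ) ≤ (r : ℝ) := by exact_mod_cast h1
  have hnR : (2 * r : ℝ) ≤ (n : ℝ) := by exact_mod_cast h2
  have hcpos : 0 < c := by
    apply mul_pos (by linarith)
    linarith
  -- extract eigenvector
  have hmem := spectrum.mem_iff.mp hlam
  rw [Matrix.isUnit_iff_isUnit_det, isUnit_iff_ne_zero, not_not] at hmem
  obtain ⟨v, hv0, hv⟩ := Matrix.exists_mulVec_eq_zero_iff.mpr hmem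
  have halg : (algebraMap ℝ (Matrix {S : Finset (Fin n) // S.card = r}
      {S : Finset (Fin n) // S.card = r} ℝ) lam) = lam • 1 :=
    Algebra.algebraMap_eq_smul_one lam
  rw [halg, Matrix.sub_mulVec, Matrix.smul_mulVec, Matrix.one_mulVec,
    sub_eq_zero] at hv
  have hPv : P.mulVec v = lam • v := hv.symm
  rw [hP, Matrix.smul_mulVec] at hPv
  have hAv : ((johnsonGraph n r).adjMatrix ℝ).mulVec v = (c * lam) • v := by
    calc ((johnsonGraph n r).adjMatrix ℝ).mulVec v
        = (c * (1/c)) • ((johnsonGraph n r).adjMatrix ℝ).mulVec v := by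
          rw [mul_one_div_cancel hcpos.ne', one_smul]
      _ = c • ((1/c) • ((johnsonGraph n r).adjMatrix ℝ).mulVec v) := by
          rw [smul_smul]
      _ = c • (lam • v) := by rw [hPv]
      _ = (c * lam) • v := by rw [smul_smul]
  have hclam : c * lam ≠ (r : ℝ) * ((n : ℝ) - r) := by
    rw [← hc]
    intro h
    apply hne
    have : c * lam = c * 1 := by rw [mul_one]; exact h
    exact mul_left_cancel₀ hcpos.ne' this
  have hkey := key n r h2 (c * lam) v hv0 hAv hclam
  rw [← hc] at hkey
  have hfinal : lam ≤ (c - n) / c := by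
    rw [le_div_iff₀ hcpos]
    nlinarith [hkey]
  have : (c - n) / c = 1 - (n : ℝ) / c := by
    field_simp
  linarith [hfinal, this.le, this.ge]
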